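/- Let λ be the 4-uniform morphism on {1,2,3,4} defined by λ(1)=1234, λ(2)=2143, λ(3)=1243, λ(4)=2134, and let L_t = λ^t(1). Then for every t ≥ 0, the sequence L_t is non-repetitive. -/
import Mathlib


/-- The 4-uniform morphism `λ` on `{1,2,3,4}`, encoded as `Fin 4` via `0=1, 1=2, 2=3, 3=4`:
`λ(1)=1234, λ(2)=2143, λ(3)=1243, λ(4)=2134`. -/
def lamM : Fin 4 → List (Fin 4) :=
  ![[0, 1, 2, 3], [1, 0, 3, 2], [0, 1, 3, 2], [1, 0, 2, 3]]

/-- The sequence `L_t = λ^t(1)`. -/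
def lamL : ℕ → List (Fin 4)
  | 0 => [0]
  | t + 1 => (lamL t).flatMap lamM

/-- A sequence is non-repetitive (Thue) if it contains no factor `w ++ w` with `w` nonempty. -/
def NonRep {α : Type*} (s : List α) : Prop :=
  ∀ w : List α, w ≠ [] → ¬ (w ++ w) <:+: s

lemma getD_append_left {α} (d : α) (l1 l2 : List α) (i : ℕ) (h : i < l1.length) :
    (l1 ++ l2).getD i d = l1.getD i d := by
  simp [List.getD_eq_getElem?_getD, List.getElem?_append_left h]

lemma getD_append_right {α} (d : α) (l1 l2 : List α) (i : ℕ) (h : l1.length ≤ i) :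
    (l1 ++ l2).getD i d = l2.getD (i - l1.length) d := by
  simp [List.getD_eq_getElem?_getD, List.getElem?_append_right h]

lemma lamM_len (x : Fin 4) : (lamM x).length = 4 := by fin_cases x <;> rfl

lemma length_flat (s : List (Fin 4)) : (s.flatMap lamM).length = 4 * s.length := by
  induction s with
  | nil => simp
  | cons x s ih => simp [List.flatMap_cons, ih, lamM_len x]; ring

lemma flat_getD (s : List (Fin 4)) (p : ℕ) (h : p < 4 * s.length) :
    (s.flatMap lamM).getD p 0 = (lamM (s.getD (p/4) 0)).getD (p % 4) 0 := by
  induction s generalizing p with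
  | nil => simp at h
  | cons x s ih =>
    rw [List.flatMap_cons]
    rcases lt_or_ge p 4 with hp | hp
    · have h1 : p / 4 = 0 := by omega
      have h2 : p % 4 = p := by omega
      rw [show ((lamM x ++ s.flatMap lamM).getD p 0 = _) from
        getD_append_left 0 _ _ p (by rw [lamM_len]; omega), h1, h2]
      rfl
    · have h4 : (lamM x).length = 4 := lamM_len x
      rw [show ((lamM x ++ s.flatMap lamM).getD p 0 = _) from
        getD_append_right 0 _ _ p (by omega), h4]
      rw [ih (p - 4) (by simp at h ⊢; omega)]
      have e1 : (p - 4) / 4 = p / 4 - 1 := by omega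
      have e2 : (p - 4) % 4 = p % 4 := by omega
      have e3 : (x :: s).getD (p / 4) 0 = s.getD (p / 4 - 1) 0 := by
        have : p / 4 = (p / 4 - 1) + 1 := by omega
        rw [this]; rfl
      rw [e1, e2, e3]

def BadT (x y z : Fin 4) : Prop :=
  (x = 0 ∧ y = 3 ∧ z = 1) ∨ (x = 1 ∧ y = 2 ∧ z = 0) ∨
  (x = 2 ∧ y = 1 ∧ z = 3) ∨ (x = 3 ∧ y = 0 ∧ z = 2)

instance : ∀ x y z, Decidable (BadT x y z) := fun _ _ _ => by unfold BadT; infer_instance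

/-- No bad configuration `x u y u z` with `(x,y,z)` a bad triple. -/
def NoBad (s : List (Fin 4)) : Prop :=
  ∀ b k, 1 ≤ k → b + 2*k < s.length →
    (∀ q, b < q → q < b + k → s.getD q 0 = s.getD (q+k) 0) →
    ¬ BadT (s.getD b 0) (s.getD (b+k) 0) (s.getD (b+2*k) 0)

-- decidable facts about the blocks
lemma hb_block : ∀ x : Fin 4, ∀ j, j < 4 → (2 ≤ ((lamM x).getD j 0).val ↔ 2 ≤ j) := by decide

lemma block_inj : ∀ x y : Fin 4, lamM x = lamM y → x = y := by decide

lemma partial_case : ∀ r : Fin 4, r.val ≠ 0 → ∀ x y z : Fin 4,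
    (lamM x).drop r.val = (lamM y).drop r.val →
    (lamM y).take r.val = (lamM z).take r.val →
    x = y ∨ y = z ∨ BadT x y z := by decide

lemma no_adj : ∀ x : Fin 4, ∀ j, j < 3 → (lamM x).getD j 0 ≠ (lamM x).getD (j+1) 0 := by decide

lemma no_adj2 : ∀ x y : Fin 4, (lamM x).getD 3 0 ≠ (lamM y).getD 0 0 := by decide

lemma bad_hb : ∀ x y z : Fin 4, BadT x y z →
    ((2 ≤ x.val ↔ ¬ 2 ≤ y.val) ∧ (2 ≤ y.val ↔ ¬ 2 ≤ z.val)) := by decide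

lemma sq_of_idx (s : List (Fin 4)) (a k : ℕ) (hk : 1 ≤ k) (hb : a + 2*k ≤ s.length)
    (h : ∀ q, a ≤ q → q < a + k → s.getD q 0 = s.getD (q+k) 0) : ¬ NonRep s := by
  intro hnr
  have lw1 : ((s.drop a).take k).length = k := by simp; omega
  have hww : (s.drop a).take k = (s.drop (a+k)).take k := by
    apply List.ext_getElem (by simp; omega)
    intro i h1 h2
    have h1' : i < k := by simpa [lw1] using h1
    have e1 : a + k + i = a + i + k := by omega
    simp only [List.getElem_take, List.getElem_drop]
    have hx := h (a+i) (by omega) (by omega)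
    simp only [e1]
    rw [← List.getD_eq_getElem s 0 (by omega : a + i < s.length),
        ← List.getD_eq_getElem s 0 (by omega : a + i + k < s.length)]
    exact hx
  have hsplit : s.take a ++ ((s.drop a).take k ++ (s.drop a).take k) ++ s.drop (a + 2*k) = s := by
    conv_lhs => rw [show ((s.drop a).take k ++ (s.drop a).take k : List (Fin 4))
      = (s.drop a).take k ++ (s.drop (a+k)).take k from by rw [← hww]]
    have e2 : s.drop (a+k) = (s.drop a).drop k := by rw [List.drop_drop]
    have e3 : (s.drop a).take k ++ ((s.drop a).drop k).take k = (s.drop a).take (2*k) := by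
      rw [show 2*k = k + k by omega, List.take_add]
    rw [e2, e3]
    have e4 : s.drop (a + 2*k) = (s.drop a).drop (2*k) := by rw [List.drop_drop]
    rw [e4, List.append_assoc, List.take_append_drop, List.take_append_drop]
  have := hnr ((s.drop a).take k) (by
    intro hh; rw [hh] at lw1; simp at lw1; omega)
  exact this ⟨s.take a, s.drop (a+2*k), hsplit⟩

lemma getD_concat_mid (p m q : List (Fin 4)) (i : ℕ) (h : i < m.length) :
    (p ++ m ++ q).getD (p.length + i) 0 = m.getD i 0 := by
  rw [List.append_assoc, getD_append_right 0 _ _ _ (by omega),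
      show p.length + i - p.length = i by omega, getD_append_left 0 _ _ _ h]

lemma idx_of_sq (s w : List (Fin 4)) (hw : w ≠ []) (hinf : (w ++ w) <:+: s) :
    ∃ a k, 1 ≤ k ∧ a + 2*k ≤ s.length ∧
      ∀ i, i < k → s.getD (a+i) 0 = s.getD (a+k+i) 0 := by
  obtain ⟨p, q, hpq⟩ := hinf
  have hk : 1 ≤ w.length := by
    cases w with
    | nil => exact absurd rfl hw
    | cons _ _ => simp
  refine ⟨p.length, w.length, hk, ?_, ?_⟩
  · have := congrArg List.length hpq
    simp at this
    omega
  · intro i hi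
    have h1 : s.getD (p.length + i) 0 = w.getD i 0 := by
      rw [← hpq, getD_concat_mid p (w++w) q i (by simp; omega),
          getD_append_left 0 _ _ _ (by omega)]
    have h2 : s.getD (p.length + w.length + i) 0 = w.getD i 0 := by
      rw [← hpq, show p.length + w.length + i = p.length + (w.length + i) by omega,
          getD_concat_mid p (w++w) q _ (by simp; omega),
          getD_append_right 0 _ _ _ (by omega),
          show w.length + i - w.length = i by omega]
    rw [h1, h2]

lemma flat_hb (s : List (Fin 4)) (p : ℕ) (h : p < 4 * s.length) :
    (2 ≤ (((s.flatMap lamM)).getD p 0).val ↔ 2 ≤ p % 4) := by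
  rw [flat_getD s p h]; exact hb_block _ _ (by omega)

lemma noBad_flat (s : List (Fin 4)) : NoBad (s.flatMap lamM) := by
  intro b k hk hlen hmid hbad
  rw [length_flat] at hlen
  obtain ⟨e1, e2⟩ := bad_hb _ _ _ hbad
  have E1 : (2 ≤ b % 4 ↔ ¬ 2 ≤ (b+k) % 4) := by
    rw [← flat_hb s b (by omega), ← flat_hb s (b+k) (by omega)]; exact e1
  have E2 : (2 ≤ (b+k) % 4 ↔ ¬ 2 ≤ (b+2*k) % 4) := by
    rw [← flat_hb s (b+k) (by omega), ← flat_hb s (b+2*k) (by omega)]; exact e2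
  rcases Nat.lt_or_ge k 3 with hk3 | hk3
  · -- k = 1 or 2
    interval_cases k
    · omega
    · have m1 := hmid (b+1) (by omega) (by omega)
      have M1 : (2 ≤ (b+1) % 4 ↔ 2 ≤ (b+1+2) % 4) := by
        rw [← flat_hb s (b+1) (by omega), ← flat_hb s (b+1+2) (by omega), m1]
      omega
  · have m1 := hmid (b+1) (by omega) (by omega)
    have m2 := hmid (b+2) (by omega) (by omega)
    have M1 : (2 ≤ (b+1) % 4 ↔ 2 ≤ (b+1+k) % 4) := by
      rw [← flat_hb s (b+1) (by omega), ← flat_hb s (b+1+k) (by omega), m1]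
    have M2 : (2 ≤ (b+2) % 4 ↔ 2 ≤ (b+2+k) % 4) := by
      rw [← flat_hb s (b+2) (by omega), ← flat_hb s (b+2+k) (by omega), m2]
    omega

lemma nonRep_flat (s : List (Fin 4)) (h1 : NonRep s) (h2 : NoBad s) :
    NonRep (s.flatMap lamM) := by
  intro w hw hinf
  obtain ⟨a, n, hn1, hlen, heq⟩ := idx_of_sq _ w hw hinf
  rw [length_flat] at hlen
  rcases Nat.lt_or_ge n 2 with hsm | hsm
  · -- n = 1
    have hq := heq 0 (by omega)
    rw [Nat.add_zero, Nat.add_zero] at hq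
    rw [flat_getD _ _ (by omega), flat_getD _ _ (by omega)] at hq
    rcases Nat.lt_or_ge (a % 4) 3 with h3 | h3
    · rw [show (a+n)/4 = a/4 by omega, show (a+n)%4 = a%4+1 by omega] at hq
      exact no_adj _ (a%4) h3 hq
    · rw [show (a+n)/4 = a/4+1 by omega, show (a+n)%4 = 0 by omega,
          show a%4 = 3 by omega] at hq
      exact no_adj2 _ _ hq
  · -- n ≥ 2 : first derive 4 ∣ n
    have q0 := heq 0 (by omega)
    rw [Nat.add_zero, Nat.add_zero] at q0
    have q1 := heq 1 (by omega)
    have H0 : (2 ≤ a%4 ↔ 2 ≤ (a+n)%4) := by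
      rw [← flat_hb s a (by omega), ← flat_hb s (a+n) (by omega), q0]
    have H1 : (2 ≤ (a+1)%4 ↔ 2 ≤ (a+n+1)%4) := by
      rw [← flat_hb s (a+1) (by omega), ← flat_hb s (a+n+1) (by omega), q1]
    have h4 : n % 4 = 0 := by omega
    obtain ⟨k, rfl⟩ : ∃ k, n = 4*k := ⟨n/4, by omega⟩
    have hk1 : 1 ≤ k := by omega
    -- entrywise pullback
    have ent : ∀ p, a ≤ p → p < a + 4*k →
        (lamM (s.getD (p/4) 0)).getD (p%4) 0
          = (lamM (s.getD (p/4 + k) 0)).getD (p%4) 0 := by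
      intro p hp1 hp2
      have hp := heq (p - a) (by omega)
      rw [show a + (p-a) = p by omega, show a + 4*k + (p-a) = p + 4*k by omega] at hp
      rw [flat_getD _ _ (by omega), flat_getD _ _ (by omega)] at hp
      rw [show (p+4*k)/4 = p/4 + k by omega, show (p+4*k)%4 = p%4 by omega] at hp
      exact hp
    -- full-block pullback
    have full : ∀ q, a ≤ 4*q → 4*q + 4 ≤ a + 4*k → s.getD q 0 = s.getD (q+k) 0 := by
      intro q hq1 hq2
      apply block_inj
      apply List.ext_getElem (by rw [lamM_len, lamM_len])
      intro j hj hj'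
      have hj4 : j < 4 := by rwa [lamM_len] at hj
      have he := ent (4*q+j) (by omega) (by omega)
      rw [show (4*q+j)/4 = q by omega, show (4*q+j)%4 = j by omega] at he
      rw [← List.getD_eq_getElem _ 0 hj, ← List.getD_eq_getElem _ 0 hj']
      exact he
    rcases Nat.eq_zero_or_pos (a % 4) with hr | hr
    · -- aligned case: square in s
      exact sq_of_idx s (a/4) k hk1 (by omega)
        (fun q hq1 hq2 => full q (by omega) (by omega)) h1
    · -- misaligned case
      have dropeq : (lamM (s.getD (a/4) 0)).drop (a%4)
          = (lamM (s.getD (a/4 + k) 0)).drop (a%4) := by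
        apply List.ext_getElem (by rw [List.length_drop, List.length_drop, lamM_len, lamM_len])
        intro j hj hj'
        have hj4 : a%4 + j < 4 := by rw [List.length_drop, lamM_len] at hj; omega
        simp only [List.getElem_drop]
        have he := ent (a + j) (by omega) (by omega)
        rw [show (a+j)/4 = a/4 by omega, show (a+j)%4 = a%4 + j by omega] at he
        rw [← List.getD_eq_getElem _ 0 (by rw [lamM_len]; omega),
            ← List.getD_eq_getElem _ 0 (by rw [lamM_len]; omega)]
        exact he
      have takeeq : (lamM (s.getD (a/4 + k) 0)).take (a%4)
          = (lamM (s.getD (a/4 + k + k) 0)).take (a%4) := by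
        apply List.ext_getElem (by rw [List.length_take, List.length_take, lamM_len, lamM_len])
        intro j hj hj'
        have hj4 : j < a%4 := by rw [List.length_take, lamM_len] at hj; omega
        simp only [List.getElem_take]
        have he := ent (4*(a/4 + k) + j) (by omega) (by omega)
        rw [show (4*(a/4+k)+j)/4 = a/4 + k by omega, show (4*(a/4+k)+j)%4 = j by omega] at he
        rw [← List.getD_eq_getElem _ 0 (by rw [lamM_len]; omega),
            ← List.getD_eq_getElem _ 0 (by rw [lamM_len]; omega)]
        exact he
      rcases partial_case ⟨a%4, by omega⟩ (by simpa using (by omega : ¬ a%4 = 0)) _ _ _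
        dropeq takeeq with hxy | hyz | hbad
      · refine sq_of_idx s (a/4) k hk1 (by omega) ?_ h1
        intro q hq1 hq2
        rcases Nat.eq_or_lt_of_le hq1 with hq | hq
        · rw [← hq]; exact hxy
        · exact full q (by omega) (by omega)
      · refine sq_of_idx s (a/4 + 1) k hk1 (by omega) ?_ h1
        intro q hq1 hq2
        rcases Nat.lt_or_ge q (a/4 + k) with hq | hq
        · exact full q (by omega) (by omega)
        · have hqe : q = a/4 + k := by omega
          rw [hqe]
          rw [show a/4 + k + k = a/4 + 2*k by omega] at hyz ⊢
          exact hyz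
      · refine h2 (a/4) k hk1 (by omega)
          (fun q hq1 hq2 => full q (by omega) (by omega)) ?_
        rw [show a/4 + 2*k = a/4 + k + k by omega]
        exact hbad

lemma noBad_lamL (t : ℕ) : NoBad (lamL t) := by
  cases t with
  | zero => intro b k hk hlen _; simp [lamL] at hlen; omega
  | succ t => exact noBad_flat (lamL t)

/-- For every `t ≥ 0`, the sequence `L_t = λ^t(1)` is non-repetitive. -/
theorem lamL_nonRep (t : ℕ) : NonRep (lamL t) := by
  induction t with
  | zero =>
    intro w hw hinf
    have hl := hinf.length_le
    simp [lamL] at hl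
    cases w with
    | nil => exact hw rfl
    | cons _ _ => simp at hl; omega
  | succ t ih => exact nonRep_flat (lamL t) ih (noBad_lamL t)
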